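/- Fix l > 0, a continuous function q : ℝ → ℝ satisfying the evenness condition q(l − x) = q(x) for all x ∈ [0,l], and λ ∈ ℂ, and let C and S be the solutions of the eigenvalue equation on [0,l] with C(0) = 1, C'(0) = 0 and S(0) = 0, S'(0) = 1. Assume S(l) ≠ 0, let μ ∈ ℂ, and define y₊(x) = C(x) + ((μ − C(l))/S(l))·S(x) and y₋(x) = C(l − x) − ((C(l) − μ)/S(l))·S(l − x). Then the Wronskian of y₊ and y₋ is constant with value y₊(x)·y₋'(x) − y₊'(x)·y₋(x) = (1 − μ²)/S(l) for all x ∈ [0,l]. -/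

import Mathlib

open Set

/-! Both `C`, `S` and their reflections `x ↦ C (l - x)`, `x ↦ S (l - x)` solve the same equation
`y'' = (q - λ) y` because `q` is even about `l / 2`, so every Wronskian among them is constant.
Comparing the Wronskian of `C, S` at `0` and `l` gives `C l S' l - C' l S l = 1`; comparing that of
`S (l - ·), C` gives `S' l = C l`. These two identities evaluate the Wronskian of `y₊, y₋` at `0`. -/

variable {𝔸 : Type*} [NormedCommRing 𝔸] [NormedAlgebra ℝ 𝔸]

def IsSolutionOn (V : ℝ → 𝔸) (s : Set ℝ) (y y' : ℝ → 𝔸) : Prop :=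
  ∀ x ∈ s, HasDerivAt y (y' x) x ∧ HasDerivAt y' (V x * y x) x

def wronskian (f f' g g' : ℝ → 𝔸) (x : ℝ) : 𝔸 :=
  f x * g' x - f' x * g x

namespace IsSolutionOn

variable {V : ℝ → 𝔸} {s : Set ℝ} {y y' z z' : ℝ → 𝔸}

theorem add_const_mul (hy : IsSolutionOn V s y y') (hz : IsSolutionOn V s z z') (c : 𝔸) :
    IsSolutionOn V s (fun x => y x + c * z x) (fun x => y' x + c * z' x) := by
  intro x hx
  exact ⟨(hy x hx).1.add ((hz x hx).1.const_mul c),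
    ((hy x hx).2.add ((hz x hx).2.const_mul c)).congr_deriv (by ring)⟩

theorem comp_const_sub {t : Set ℝ} (hy : IsSolutionOn V s y y') (c : ℝ)
    (hts : ∀ x ∈ t, c - x ∈ s) (hV : ∀ x ∈ t, V (c - x) = V x) :
    IsSolutionOn V t (fun x => y (c - x)) (fun x => -y' (c - x)) := by
  intro x hx
  obtain ⟨hy₁, hy₂⟩ := hy (c - x) (hts x hx)
  exact ⟨hy₁.comp_const_sub c x,
    (hy₂.comp_const_sub c x).neg.congr_deriv (by rw [hV x hx, neg_neg])⟩

theorem wronskian_eq {a b : ℝ} (hy : IsSolutionOn V (Icc a b) y y')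
    (hz : IsSolutionOn V (Icc a b) z z') :
    ∀ x ∈ Icc a b, wronskian y y' z z' x = wronskian y y' z z' a := by
  have hderiv : ∀ x ∈ Icc a b, HasDerivAt (wronskian y y' z z') 0 x := by
    intro x hx
    obtain ⟨hy₁, hy₂⟩ := hy x hx
    obtain ⟨hz₁, hz₂⟩ := hz x hx
    exact ((hy₁.mul hz₂).sub (hy₂.mul hz₁)).congr_deriv (by ring)
  refine constant_of_has_deriv_right_zero
    (fun x hx => (hderiv x hx).continuousAt.continuousWithinAt) fun x hx => ?_
  exact (hderiv x (Ico_subset_Icc_self hx)).hasDerivWithinAt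

end IsSolutionOn

theorem isSolutionOn_of_eigen {q : ℝ → ℝ} {lam : ℂ} {s : Set ℝ} {y y' y'' : ℝ → ℂ}
    (hy : ∀ x ∈ s, HasDerivAt y (y' x) x) (hy' : ∀ x ∈ s, HasDerivAt y' (y'' x) x)
    (hode : ∀ x ∈ s, -y'' x + (q x : ℂ) * y x = lam * y x) :
    IsSolutionOn (fun x => (q x : ℂ) - lam) s y y' :=
  fun x hx => ⟨hy x hx, (hy' x hx).congr_deriv (by linear_combination -hode x hx)⟩

theorem multiplier_wronskian_general (l : ℝ) (hl : 0 < l)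
    (q : ℝ → ℝ)
    (hq_even : ∀ x ∈ Icc 0 l, q (l - x) = q x) (lam : ℂ)
    (C C' C'' S S' S'' : ℝ → ℂ)
    (hC : ∀ x ∈ Icc 0 l, HasDerivAt C (C' x) x)
    (hC' : ∀ x ∈ Icc 0 l, HasDerivAt C' (C'' x) x)
    (hCode : ∀ x ∈ Icc 0 l, -C'' x + (q x : ℂ) * C x = lam * C x)
    (hS : ∀ x ∈ Icc 0 l, HasDerivAt S (S' x) x)
    (hS' : ∀ x ∈ Icc 0 l, HasDerivAt S' (S'' x) x)
    (hSode : ∀ x ∈ Icc 0 l, -S'' x + (q x : ℂ) * S x = lam * S x)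
    (hC0 : C 0 = 1) (hC'0 : C' 0 = 0) (hS0 : S 0 = 0) (hS'0 : S' 0 = 1)
    (hSl : S l ≠ 0) (μ : ℂ) :
    ∀ x ∈ Icc 0 l,
      (C x + ((μ - C l) / S l) * S x) * (-C' (l - x) + ((C l - μ) / S l) * S' (l - x))
        - (C' x + ((μ - C l) / S l) * S' x) * (C (l - x) - ((C l - μ) / S l) * S (l - x))
      = (1 - μ ^ 2) / S l := by
  have hlmem : l ∈ Icc 0 l := right_mem_Icc.2 hl.le
  have hCsol := isSolutionOn_of_eigen hC hC' hCode
  have hSsol := isSolutionOn_of_eigen hS hS' hSode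
  have hreflect : ∀ x ∈ Icc 0 l, l - x ∈ Icc 0 l := fun x hx =>
    ⟨sub_nonneg.2 hx.2, sub_le_self l hx.1⟩
  have heven : ∀ x ∈ Icc 0 l, (q (l - x) : ℂ) - lam = q x - lam := fun x hx => by rw [hq_even x hx]
  have hCr := hCsol.comp_const_sub l hreflect heven
  have hSr := hSsol.comp_const_sub l hreflect heven
  have hCS : C l * S' l - C' l * S l = 1 := by
    simpa [wronskian, hC0, hC'0, hS0, hS'0] using hCsol.wronskian_eq hSsol l hlmem
  have hS'l : S' l = C l := by
    simpa [wronskian, hC0, hC'0, hS0, hS'0] using (hSr.wronskian_eq hCsol l hlmem).symm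
  intro x hx
  have hconst := (hCsol.add_const_mul hSsol ((μ - C l) / S l)).wronskian_eq
    (hCr.add_const_mul hSr (-((C l - μ) / S l))) x hx
  simp only [wronskian, hC0, hC'0, hS0, hS'0, sub_zero] at hconst
  rw [hS'l] at hCS hconst
  field_simp at hconst ⊢
  linear_combination hconst + S l * hCS

/-- For an even potential and `S l ≠ 0`, the functions
`y₊ x = C x + ((μ - C l) / S l) * S x` and `y₋ x = C (l - x) - ((C l - μ) / S l) * S (l - x)`
(with `y₊ 0 = 1`, `y₊ l = μ`, `y₋ l = 1`, `y₋ 0 = μ`) have constant Wronskian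
`y₊ y₋' - y₊' y₋ = (1 - μ²) / S l` on `[0, l]`. -/
theorem multiplier_wronskian (l : ℝ) (hl : 0 < l)
    (q : ℝ → ℝ) (hq_cont : ContinuousOn q (Icc 0 l))
    (hq_even : ∀ x ∈ Icc 0 l, q (l - x) = q x) (lam : ℂ)
    (C C' C'' S S' S'' : ℝ → ℂ)
    (hC : ∀ x ∈ Icc 0 l, HasDerivAt C (C' x) x)
    (hC' : ∀ x ∈ Icc 0 l, HasDerivAt C' (C'' x) x)
    (hC'' : ContinuousOn C'' (Icc 0 l))
    (hCode : ∀ x ∈ Icc 0 l, -C'' x + (q x : ℂ) * C x = lam * C x)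
    (hS : ∀ x ∈ Icc 0 l, HasDerivAt S (S' x) x)
    (hS' : ∀ x ∈ Icc 0 l, HasDerivAt S' (S'' x) x)
    (hS'' : ContinuousOn S'' (Icc 0 l))
    (hSode : ∀ x ∈ Icc 0 l, -S'' x + (q x : ℂ) * S x = lam * S x)
    (hC0 : C 0 = 1) (hC'0 : C' 0 = 0) (hS0 : S 0 = 0) (hS'0 : S' 0 = 1)
    (hSl : S l ≠ 0) (μ : ℂ) :
    ∀ x ∈ Icc 0 l,
      (C x + ((μ - C l) / S l) * S x) * (-C' (l - x) + ((C l - μ) / S l) * S' (l - x))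
        - (C' x + ((μ - C l) / S l) * S' x) * (C (l - x) - ((C l - μ) / S l) * S (l - x))
      = (1 - μ ^ 2) / S l :=
  multiplier_wronskian_general l hl q hq_even lam C C' C'' S S' S'' hC hC' hCode hS hS' hSode hC0
    hC'0 hS0 hS'0 hSl μ
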